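/- arXiv:0903.4647 — 4 statements merged into one kernel-verified Lean document; each statement's English description precedes it below -/
import Mathlib

section
/- There exists a universal constant c > 0 such that for every λ > 0 and every integer n ≥ λ, if X is a Poisson random variable with mean λ, then P(X = n) ≥ (c/√n)·exp(-(n-λ)²/λ). -/
/-!
Stirling's sequence `n! / (√(2n) (n/e)^n)` is decreasing, so its first term gives
`n! ≤ e √n (n/e)^n`. It remains to see `(n/e)^n e^{-(n-λ)²/λ} ≤ e^{-λ} λ^n`, which after
expanding `(n-λ)²/λ = n²/λ - 2n + λ` is the `n`-th power of `n/λ ≤ e^{n/λ - 1}`.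
-/

open MeasureTheory ProbabilityTheory Real
open scoped Nat

theorem factorial_le_exp_one_mul_sqrt_mul_pow {n : ℕ} (hn : n ≠ 0) :
    (n ! : ℝ) ≤ exp 1 * √n * (n / exp 1) ^ n := by
  obtain ⟨m, rfl⟩ := Nat.exists_eq_succ_of_ne_zero hn
  have hmono : Stirling.stirlingSeq (m + 1) ≤ Stirling.stirlingSeq 1 :=
    Stirling.stirlingSeq'_antitone (Nat.zero_le m)
  rw [Stirling.stirlingSeq_one, Stirling.stirlingSeq, div_le_iff₀ (by positivity)] at hmono
  calc ((m + 1) ! : ℝ)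
      ≤ exp 1 / √2 * (√(2 * (m + 1 : ℕ)) * ((m + 1 : ℕ) / exp 1) ^ (m + 1)) := hmono
    _ = exp 1 * √(m + 1 : ℕ) * ((m + 1 : ℕ) / exp 1) ^ (m + 1) := by
        rw [sqrt_mul zero_le_two]
        field_simp

theorem div_exp_one_pow_mul_exp_le {lam : ℝ} (hlam : 0 < lam) (n : ℕ) :
    ((n : ℝ) / exp 1) ^ n * exp (-((n : ℝ) - lam) ^ 2 / lam) ≤ exp (-lam) * lam ^ n := by
  have hbase : ((n : ℝ) / lam) ^ n ≤ exp ((n : ℝ) / lam - 1) ^ n :=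
    pow_le_pow_left₀ (by positivity) (by linarith [add_one_le_exp ((n : ℝ) / lam - 1)]) n
  calc ((n : ℝ) / exp 1) ^ n * exp (-((n : ℝ) - lam) ^ 2 / lam)
      = ((n : ℝ) / lam) ^ n * lam ^ n * (exp 1 ^ n)⁻¹ *
          exp (-((n : ℝ) - lam) ^ 2 / lam) := by
        rw [div_pow, div_pow]
        field_simp
    _ ≤ exp ((n : ℝ) / lam - 1) ^ n * lam ^ n * (exp 1 ^ n)⁻¹ *
        exp (-((n : ℝ) - lam) ^ 2 / lam) := by gcongr
    _ = exp (-lam) * lam ^ n := by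
        have hexponent :
            -lam = n * ((n : ℝ) / lam - 1) - n * 1 + -((n : ℝ) - lam) ^ 2 / lam := by
          field_simp
          ring
        rw [← exp_nat_mul, ← exp_nat_mul, hexponent, exp_add, exp_sub]
        field_simp

theorem exp_neg_one_div_sqrt_mul_exp_le_poisson_pmf {lam : ℝ} (hlam : 0 < lam) {n : ℕ}
    (hn : n ≠ 0) :
    exp (-1) / √n * exp (-((n : ℝ) - lam) ^ 2 / lam) ≤ exp (-lam) * lam ^ n / n ! := by
  calc exp (-1) / √n * exp (-((n : ℝ) - lam) ^ 2 / lam)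
      ≤ exp (-lam) * lam ^ n / (exp 1 * √n * (n / exp 1) ^ n) := by
        rw [le_div_iff₀ (by positivity)]
        calc exp (-1) / √n * exp (-((n : ℝ) - lam) ^ 2 / lam) * (exp 1 * √n * (n / exp 1) ^ n)
            = ((n : ℝ) / exp 1) ^ n * exp (-((n : ℝ) - lam) ^ 2 / lam) := by
              rw [exp_neg]
              field_simp
          _ ≤ exp (-lam) * lam ^ n := div_exp_one_pow_mul_exp_le hlam n
    _ ≤ exp (-lam) * lam ^ n / n ! :=
      div_le_div_of_nonneg_left (by positivity) (by positivity)
        (factorial_le_exp_one_mul_sqrt_mul_pow hn)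

/-- There exists a universal constant `c > 0` such that for every `λ > 0` and
every integer `n ≥ λ`, if `X` is a Poisson random variable with mean `λ`, then
`P(X = n) ≥ (c/√n)·exp(-(n-λ)²/λ)`. -/
theorem poisson_point_lower_bound :
    ∃ c : ℝ, 0 < c ∧
      ∀ (Ω : Type) (_ : MeasureSpace Ω), IsProbabilityMeasure (ℙ : Measure Ω) →
      ∀ (lam : ℝ), 0 < lam →
      ∀ (X : Ω → ℕ), Measurable X →
      (∀ m : ℕ, ℙ {ω | X ω = m} =
        ENNReal.ofReal (Real.exp (-lam) * lam ^ m / (Nat.factorial m))) →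
      ∀ n : ℕ, lam ≤ n →
        ENNReal.ofReal (c / Real.sqrt n * Real.exp (-((n : ℝ) - lam) ^ 2 / lam)) ≤
          ℙ {ω | X ω = n} := by
  refine ⟨exp (-1), exp_pos _, ?_⟩
  intro Ω _ _ lam hlam X _ hX n hn
  have hn0 : n ≠ 0 := by
    rintro rfl
    rw [Nat.cast_zero] at hn
    linarith
  rw [hX n]
  exact ENNReal.ofReal_le_ofReal (exp_neg_one_div_sqrt_mul_exp_le_poisson_pmf hlam hn0)
end

section
/- Let d ≥ 2. There exists a constant C > 0 depending only on d such that for all L, W > 0 and every x ∈ ℝ^d with |x_1| ≤ L/2, the first coordinate of G satisfies |G(x)_1| ≤ C·L^{-(d-2)}·W^{d-1}. -/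
open MeasureTheory

/-- The box `V = {z ∈ ℝ^d : |z_1| ≤ L, |z_i| ≤ W for 2 ≤ i ≤ d}`. -/
def gravBox (d : ℕ) (h0 : 0 < d) (L W : ℝ) : Set (EuclideanSpace ℝ (Fin d)) :=
  {z | |z ⟨0, h0⟩| ≤ L ∧ ∀ i : Fin d, i ≠ ⟨0, h0⟩ → |z i| ≤ W}

/-- `G(x) = -∫_V (z-x)/|z-x|^d dz`, the conditional expectation of the gravitational force at
`x` given that the box `V` contains no stars. -/
noncomputable def gravBoxForce (d : ℕ) (h0 : 0 < d) (L W : ℝ)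
    (x : EuclideanSpace ℝ (Fin d)) : EuclideanSpace ℝ (Fin d) :=
  -∫ z in gravBox d h0 L W, (‖z - x‖ ^ d)⁻¹ • (z - x)

/-!
Reflect in the hyperplane `z₁ = x₁`. The slab `A = {z ∈ V : |z₁ - x₁| ≤ L/2}` lies in `V` because
`|x₁| ≤ L/2`, and it is invariant under the reflection, which flips the sign of the first
coordinate of the integrand; hence `A` contributes nothing to `G(x)₁`. On `V \ A` we have
`|z - x| ≥ |z₁ - x₁| > L/2`, so the first coordinate of the integrand is at most
`|z - x|^{1-d} ≤ (L/2)^{1-d}`, while `vol V = 2L (2W)^{d-1}`. This gives the bound with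
`C = 2^{2d-1}`.
-/

theorem setIntegral_eq_zero_of_comp_eq_neg {X E : Type*} [MeasurableSpace X]
    [NormedAddCommGroup E] [NormedSpace ℝ E] {μ : Measure X} {σ : X → X}
    (hσ : MeasurePreserving σ μ μ) (hσ' : MeasurableEmbedding σ) {s : Set X} (hs : σ ⁻¹' s = s)
    {f : X → E} (hf : ∀ z, f (σ z) = -f z) : ∫ z in s, f z ∂μ = 0 := by
  have h := hσ.setIntegral_preimage_emb hσ' f s
  simp only [hs, hf, integral_neg] at h
  have h2 : (2 : ℝ) • ∫ z in s, f z ∂μ = 0 := by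
    rw [two_smul]; nth_rw 1 [← h]; exact neg_add_cancel _
  exact (smul_eq_zero.mp h2).resolve_left two_ne_zero

section EuclideanSpace

variable {ι : Type*}

def coordBox (i₀ : ι) (a L W : ℝ) : Set (EuclideanSpace ℝ ι) :=
  {z | |z i₀ - a| ≤ L ∧ ∀ i, i ≠ i₀ → |z i| ≤ W}

lemma isClosed_coordBox (i₀ : ι) (a L W : ℝ) : IsClosed (coordBox i₀ a L W) := by
  have hcont (i : ι) : Continuous fun z : EuclideanSpace ℝ ι => z i :=
    (continuous_apply i).comp (PiLp.continuous_ofLp 2 _)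
  simp only [coordBox, Set.ofPred_and, Set.ofPred_forall]
  exact (isClosed_le ((hcont i₀).sub continuous_const).abs continuous_const).inter <|
    isClosed_iInter fun i => isClosed_iInter fun _ => isClosed_le (hcont i).abs continuous_const

lemma coordBox_subset {i₀ : ι} {a b L L' W : ℝ} (h : |a - b| + L' ≤ L) :
    coordBox i₀ a L' W ⊆ coordBox i₀ b L W := fun z ⟨hz, hW⟩ =>
  ⟨(abs_sub_le _ a _).trans (by linarith), hW⟩

variable [Fintype ι]

lemma abs_integral_apply_le {X : Type*} [MeasurableSpace X] {μ : Measure X}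
    (g : X → EuclideanSpace ℝ ι) (i : ι) : |(∫ z, g z ∂μ) i| ≤ |∫ z, g z i ∂μ| := by
  by_cases hg : Integrable g μ
  · exact (congrArg abs ((EuclideanSpace.proj i).integral_comp_comm hg)).ge
  · simp [integral_undef hg]

lemma abs_inv_norm_pow_succ_mul_apply_le {r : ℝ} (hr : 0 < r) {w : EuclideanSpace ℝ ι}
    (hw : r ≤ ‖w‖) (i₀ : ι) (k : ℕ) : |(‖w‖ ^ (k + 1))⁻¹ * w i₀| ≤ (r ^ k)⁻¹ := by
  have hw₀ : 0 < ‖w‖ := hr.trans_le hw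
  calc |(‖w‖ ^ (k + 1))⁻¹ * w i₀| ≤ (‖w‖ ^ (k + 1))⁻¹ * ‖w‖ := by
        rw [abs_mul, abs_of_pos (by positivity)]
        gcongr
        exact PiLp.norm_apply_le w i₀
    _ = (‖w‖ ^ k)⁻¹ := by rw [pow_succ, mul_inv, inv_mul_cancel_right₀ hw₀.ne']
    _ ≤ (r ^ k)⁻¹ := by gcongr

variable [DecidableEq ι]

lemma volume_coordBox (i₀ : ι) (a L W : ℝ) :
    volume (coordBox i₀ a L W) =
      ENNReal.ofReal (2 * L) * ENNReal.ofReal (2 * W) ^ (Fintype.card ι - 1) := by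
  have hbox : coordBox i₀ a L W = WithLp.ofLp ⁻¹'
      Set.univ.pi (Function.update (fun _ => Set.Icc (-W) W) i₀ (Set.Icc (a - L) (a + L))) := by
    ext z
    simp only [coordBox, Set.mem_ofPred_eq, Set.mem_preimage, Set.mem_univ_pi]
    constructor
    · rintro ⟨h₀, h⟩ i
      rcases eq_or_ne i i₀ with rfl | hi
      · obtain ⟨h₁, h₂⟩ := abs_le.mp h₀
        simpa using ⟨by linarith, by linarith⟩
      · simpa [hi, abs_le] using h i hi
    · intro h
      refine ⟨?_, fun i hi => by simpa [hi, abs_le] using h i⟩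
      obtain ⟨h₁, h₂⟩ : z i₀ ∈ Set.Icc (a - L) (a + L) := by simpa using h i₀
      exact abs_le.mpr ⟨by linarith, by linarith⟩
  have hmeas : MeasurableSet (Set.univ.pi
      (Function.update (fun _ => Set.Icc (-W) W) i₀ (Set.Icc (a - L) (a + L)))) :=
    MeasurableSet.univ_pi fun i => by
      rcases eq_or_ne i i₀ with rfl | hi <;> simp [*, measurableSet_Icc]
  rw [hbox, (PiLp.volume_preserving_ofLp ι).measure_preimage hmeas.nullMeasurableSet,
    volume_pi_pi, Finset.prod_congr rfl fun i _ =>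
      Function.apply_update (fun _ (s : Set ℝ) => volume s) _ i₀ _ i,
    Finset.prod_update_of_mem (Finset.mem_univ i₀)]
  simp [Real.volume_Icc, Finset.card_sdiff, two_mul]

noncomputable def coordNeg (i₀ : ι) : EuclideanSpace ℝ ι ≃ₗᵢ[ℝ] EuclideanSpace ℝ ι :=
  LinearIsometryEquiv.piLpCongrRight 2 fun i =>
    if i = i₀ then LinearIsometryEquiv.neg ℝ else LinearIsometryEquiv.refl ℝ ℝ

lemma coordNeg_apply (i₀ : ι) (z : EuclideanSpace ℝ ι) (i : ι) :
    coordNeg i₀ z i = if i = i₀ then -z i else z i := by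
  by_cases h : i = i₀ <;> simp [coordNeg, h]

noncomputable def coordReflection (i₀ : ι) (x : EuclideanSpace ℝ ι) :
    EuclideanSpace ℝ ι ≃ₜ EuclideanSpace ℝ ι :=
  (Homeomorph.subRight x).trans ((coordNeg i₀).toHomeomorph.trans (Homeomorph.addLeft x))

lemma coordReflection_sub (i₀ : ι) (x z : EuclideanSpace ℝ ι) :
    coordReflection i₀ x z - x = coordNeg i₀ (z - x) :=
  add_sub_cancel_left x _

lemma measurePreserving_coordReflection (i₀ : ι) (x : EuclideanSpace ℝ ι) :
    MeasurePreserving (coordReflection i₀ x) :=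
  (measurePreserving_add_left volume x).comp <|
    (coordNeg i₀).measurePreserving.comp (measurePreserving_sub_right volume x)

lemma preimage_coordReflection_coordBox (i₀ : ι) (x : EuclideanSpace ℝ ι) (L W : ℝ) :
    coordReflection i₀ x ⁻¹' coordBox i₀ (x i₀) L W = coordBox i₀ (x i₀) L W := by
  have h (z : EuclideanSpace ℝ ι) (i : ι) :
      coordReflection i₀ x z i = if i = i₀ then 2 * x i₀ - z i else z i := by
    rw [← sub_add_cancel (coordReflection i₀ x z) x, PiLp.add_apply, coordReflection_sub,
      coordNeg_apply]
    split_ifs with hi <;> simp [hi]; ring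
  ext z
  simp only [coordBox, Set.mem_preimage, Set.mem_ofPred_eq, h, if_true]
  refine and_congr ?_ (forall_congr' fun i => imp_congr_right fun hi => by rw [if_neg hi])
  rw [show 2 * x i₀ - z i₀ - x i₀ = -(z i₀ - x i₀) by ring, abs_neg]

lemma coordReflection_kernel_apply (i₀ : ι) (x z : EuclideanSpace ℝ ι) (n : ℕ) :
    (‖coordReflection i₀ x z - x‖ ^ n)⁻¹ * (coordReflection i₀ x z - x) i₀ =
      -((‖z - x‖ ^ n)⁻¹ * (z - x) i₀) := by
  rw [coordReflection_sub, LinearIsometryEquiv.norm_map, coordNeg_apply, if_pos rfl, mul_neg]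

theorem abs_setIntegral_coordBox_kernel_apply_le (i₀ : ι) {L W : ℝ} (hL : 0 < L) (hW : 0 ≤ W)
    {x : EuclideanSpace ℝ ι} (hx : |x i₀| ≤ L / 2) (k : ℕ) :
    |∫ z in coordBox i₀ 0 L W, (‖z - x‖ ^ (k + 1))⁻¹ * (z - x) i₀| ≤
      ((L / 2) ^ k)⁻¹ * (2 * L * (2 * W) ^ (Fintype.card ι - 1)) := by
  set f : EuclideanSpace ℝ ι → ℝ := fun z => (‖z - x‖ ^ (k + 1))⁻¹ * (z - x) i₀
  set V := coordBox i₀ 0 L W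
  set A := coordBox i₀ (x i₀) (L / 2) W
  by_cases hf : IntegrableOn f V
  swap
  · rw [integral_undef hf, abs_zero]
    positivity
  have hAV : A ⊆ V := coordBox_subset (by rw [sub_zero]; linarith)
  have hA : ∫ z in A, f z = 0 :=
    setIntegral_eq_zero_of_comp_eq_neg (measurePreserving_coordReflection i₀ x)
      (coordReflection i₀ x).measurableEmbedding (preimage_coordReflection_coordBox i₀ x _ _)
      (coordReflection_kernel_apply i₀ x · (k + 1))
  have hbound : ∀ z ∈ V \ A, ‖f z‖ ≤ ((L / 2) ^ k)⁻¹ := by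
    rintro z ⟨hzV, hzA⟩
    have hz : L / 2 < |(z - x) i₀| := not_le.mp fun h => hzA ⟨h, hzV.2⟩
    exact abs_inv_norm_pow_succ_mul_apply_le (by positivity)
      (hz.le.trans (PiLp.norm_apply_le (z - x) i₀)) i₀ k
  have hVfin : volume V < ⊤ := by
    rw [volume_coordBox]
    exact ENNReal.mul_lt_top ENNReal.ofReal_lt_top (ENNReal.pow_lt_top ENNReal.ofReal_lt_top)
  calc |∫ z in V, f z| = ‖∫ z in V \ A, f z‖ := by
        rw [setIntegral_sdiff (isClosed_coordBox _ _ _ _).measurableSet hf hAV, hA, sub_zero,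
          Real.norm_eq_abs]
    _ ≤ ((L / 2) ^ k)⁻¹ * volume.real (V \ A) :=
        norm_setIntegral_le_of_norm_le_const_ae' ((measure_mono Set.sdiff_subset).trans_lt hVfin)
          (.of_forall hbound)
    _ ≤ ((L / 2) ^ k)⁻¹ * volume.real V := by
        gcongr
        exacts [hVfin.ne, Set.sdiff_subset]
    _ = ((L / 2) ^ k)⁻¹ * (2 * L * (2 * W) ^ (Fintype.card ι - 1)) := by
        rw [measureReal_def, volume_coordBox, ENNReal.toReal_mul, ENNReal.toReal_pow,
          ENNReal.toReal_ofReal (by positivity), ENNReal.toReal_ofReal (by positivity)]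

end EuclideanSpace

/-- Let `d ≥ 2`. There exists a constant `C > 0` depending only on `d` such
that for all `L, W > 0` and every `x ∈ ℝ^d` with `|x_1| ≤ L/2`, the first coordinate of `G`
satisfies `|G(x)_1| ≤ C·L^{-(d-2)}·W^{d-1}`. -/
theorem gravBoxForce_first_coord_bound (d : ℕ) (hd : 2 ≤ d) :
    ∃ C : ℝ, 0 < C ∧
      ∀ (L W : ℝ), 0 < L → 0 < W →
      ∀ x : EuclideanSpace ℝ (Fin d), |x ⟨0, by omega⟩| ≤ L / 2 →
        |gravBoxForce d (by omega) L W x ⟨0, by omega⟩| ≤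
          C * L ^ (-((d : ℝ) - 2)) * W ^ (d - 1) := by
  refine ⟨2 ^ (2 * d - 1), by positivity, fun L W hL hW x hx => ?_⟩
  obtain ⟨k, rfl⟩ : ∃ k, d = k + 1 := ⟨d - 1, by omega⟩
  have hV : gravBox (k + 1) k.succ_pos L W = coordBox 0 0 L W := by
    simp [gravBox, coordBox]
  calc |gravBoxForce (k + 1) _ L W x 0|
      ≤ |∫ z in coordBox 0 0 L W, (‖z - x‖ ^ (k + 1))⁻¹ * (z - x) 0| := by
        rw [gravBoxForce, PiLp.neg_apply, abs_neg, hV]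
        exact abs_integral_apply_le _ 0
    _ ≤ ((L / 2) ^ k)⁻¹ * (2 * L * (2 * W) ^ k) := by
        simpa using abs_setIntegral_coordBox_kernel_apply_le 0 hL hW.le hx k
    _ = 2 ^ (2 * (k + 1) - 1) * L ^ (-(((k + 1 : ℕ) : ℝ) - 2)) * W ^ (k + 1 - 1) := by
        rw [show 2 * (k + 1) - 1 = 2 * k + 1 by omega, show -(((k + 1 : ℕ) : ℝ) - 2) = 1 - k by
          push_cast; ring, Real.rpow_sub hL, Real.rpow_one, Real.rpow_natCast, Nat.add_sub_cancel,
          div_pow]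
        field_simp
        ring
end

section
/- Let d ≥ 3. There exists a constant C > 0 depending only on d such that for every integer k ≥ 1, every y ∈ ℝ^d∖{0}, and every z ∈ ℝ^d with |z - y| ≤ |y|/C, one has |g(z) - Σ_{|α| ≤ k} a_α·(z-y)^α| ≤ (C·k^d/|y|^{d-1})·(2d·|z-y|/|y|)^{k+1}, where the sum is over multi-indices α with |α| ≤ k and a_α = ∂^α g(y)/α! are the Taylor coefficients of g at y. -/
open MeasureTheory

/-- The gravitational kernel `g(z) = z/|z|^d` (with the junk value `0` at `z = 0`). -/
noncomputable def gravKernel (d : ℕ) (z : EuclideanSpace ℝ (Fin d)) :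
    EuclideanSpace ℝ (Fin d) :=
  (‖z‖ ^ d)⁻¹ • z

/-- The partial derivative of a vector-valued map in the `i`-th coordinate direction. -/
noncomputable def coordPDeriv (d : ℕ) (i : Fin d)
    (f : EuclideanSpace ℝ (Fin d) → EuclideanSpace ℝ (Fin d)) :
    EuclideanSpace ℝ (Fin d) → EuclideanSpace ℝ (Fin d) :=
  fun x => fderiv ℝ f x (EuclideanSpace.single i 1)

/-- The iterated partial derivative `∂^α f` associated to a multi-index `α`. -/
noncomputable def multiPDeriv (d : ℕ) (α : Fin d → ℕ)
    (f : EuclideanSpace ℝ (Fin d) → EuclideanSpace ℝ (Fin d)) :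
    EuclideanSpace ℝ (Fin d) → EuclideanSpace ℝ (Fin d) :=
  (List.finRange d).foldr (fun i g => (coordPDeriv d i)^[α i] g) f

/-- The Taylor coefficient `a_α = ∂^α g(y)/α!` of `g` at `y`. -/
noncomputable def taylorCoeff (d : ℕ) (α : Fin d → ℕ) (y : EuclideanSpace ℝ (Fin d)) :
    EuclideanSpace ℝ (Fin d) :=
  ((∏ i, Nat.factorial (α i) : ℕ) : ℝ)⁻¹ • multiPDeriv d α (gravKernel d) y

/-!
Write `h = z - y`. Along the line `s ↦ y + s • h` the degree-`m` Taylor coefficient of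
`s ↦ g (y + s • h)` at `s = 0` is the homogeneous part `∑_{|α| = m} h^α ∂^α g(y) / α!`: since
partial derivatives of a smooth map commute, differentiating the degree-`m` part along `h` gives
`m + 1` times the degree-`(m + 1)` part.

In `s` the map extends holomorphically to `Q(s)^(-d/2) • (y + s • h)`, where `Q` is the complex
polynomial extending `s ↦ ‖y + s • h‖²`. On the disc `|s| ≤ R = ‖y‖ / (3‖h‖)` one has
`Re Q ≥ (‖y‖/3)²`, so the extension is bounded by `4 · 3^(d-1) / ‖y‖^(d-1)` there, and Cauchy's
estimates bound the tail of its Taylor series at `s = 1` by this bound times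
`R^(-(k+1)) / (1 - 1/R)`. For `6‖h‖ ≤ ‖y‖` this is at most
`3^(d+1) / ‖y‖^(d-1) · (3‖h‖/‖y‖)^(k+1)`, which gives the claim with `C = 3^(d+1)`.
-/

open Function Finset Nat Metric
open Set (EqOn)
open scoped ContDiff

theorem Complex.norm_sub_sum_taylorSeries_le {E : Type*} [NormedAddCommGroup E]
    [NormedSpace ℂ E] [CompleteSpace E] {F : ℂ → E} {c w : ℂ} {R M : ℝ}
    (hF : DiffContOnCl ℂ F (ball c R)) (hM : ∀ z ∈ sphere c R, ‖F z‖ ≤ M)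
    (hw : ‖w - c‖ < R) (N : ℕ) :
    ‖F w - ∑ n ∈ Finset.range N, (n ! : ℂ)⁻¹ • (w - c) ^ n • iteratedDeriv n F c‖ ≤
      M * (‖w - c‖ / R) ^ N / (1 - ‖w - c‖ / R) := by
  have hR : 0 < R := (norm_nonneg _).trans_lt hw
  set q := ‖w - c‖ / R
  have hq : q < 1 := (div_lt_one hR).2 hw
  have hterm : ∀ n, ‖(n ! : ℂ)⁻¹ • (w - c) ^ n • iteratedDeriv n F c‖ ≤ M * q ^ n := by
    intro n
    have hcauchy := Complex.norm_iteratedDeriv_le_of_forall_mem_sphere_norm_le n hR hF hM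
    rw [norm_smul, norm_smul, norm_inv, norm_pow, Complex.norm_natCast, div_pow]
    calc (n ! : ℝ)⁻¹ * (‖w - c‖ ^ n * ‖iteratedDeriv n F c‖)
        ≤ (n ! : ℝ)⁻¹ * (‖w - c‖ ^ n * (n ! * M / R ^ n)) := by gcongr
      _ = M * (‖w - c‖ ^ n / R ^ n) := by field_simp
  have htail := (hasSum_nat_add_iff' N).2
    (Complex.hasSum_taylorSeries_on_ball hF.differentiableOn (mem_ball_iff_norm.2 hw))
  have hgeom : HasSum (fun i => M * q ^ (i + N)) (M * q ^ N / (1 - q)) := by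
    have h := (hasSum_geometric_of_lt_one (by positivity) hq).mul_left (M * q ^ N)
    rw [← div_eq_mul_inv] at h
    rwa [show (fun i => M * q ^ (i + N)) = fun i => M * q ^ N * q ^ i from
      funext fun i => by ring]
  rw [← htail.tsum_eq]
  exact tsum_of_norm_bounded hgeom fun i => hterm (i + N)

section PartialDerivatives

variable {d : ℕ} {U : Set (EuclideanSpace ℝ (Fin d))}
  {f u v : EuclideanSpace ℝ (Fin d) → EuclideanSpace ℝ (Fin d)}

theorem fderiv_apply_eq_sum_coordPDeriv (x h : EuclideanSpace ℝ (Fin d)) :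
    fderiv ℝ f x h = ∑ i, h i • coordPDeriv d i f x := by
  conv_lhs => rw [← (EuclideanSpace.basisFun (Fin d) ℝ).sum_repr h]
  simp [coordPDeriv]

theorem contDiffOn_coordPDeriv (hU : IsOpen U) (hf : ContDiffOn ℝ ∞ f U) (i : Fin d) :
    ContDiffOn ℝ ∞ (coordPDeriv d i f) U :=
  (hf.fderiv_of_isOpen hU (by simp)).clm_apply contDiffOn_const

theorem contDiffOn_coordPDeriv_iterate (hU : IsOpen U) (hf : ContDiffOn ℝ ∞ f U) (i : Fin d)
    (n : ℕ) : ContDiffOn ℝ ∞ ((coordPDeriv d i)^[n] f) U := by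
  induction n with
  | zero => exact hf
  | succ n ih => rw [iterate_succ_apply']; exact contDiffOn_coordPDeriv hU ih i

theorem eqOn_coordPDeriv (hU : IsOpen U) (h : EqOn u v U) (i : Fin d) :
    EqOn (coordPDeriv d i u) (coordPDeriv d i v) U := fun x hx => by
  simp only [coordPDeriv, (h.eventuallyEq_of_mem (hU.mem_nhds hx)).fderiv_eq]

theorem eqOn_coordPDeriv_iterate (hU : IsOpen U) (h : EqOn u v U) (i : Fin d) (n : ℕ) :
    EqOn ((coordPDeriv d i)^[n] u) ((coordPDeriv d i)^[n] v) U := by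
  induction n with
  | zero => exact h
  | succ n ih => simpa only [iterate_succ_apply'] using eqOn_coordPDeriv hU ih i

theorem coordPDeriv_comm (hU : IsOpen U) (hf : ContDiffOn ℝ ∞ f U) (i j : Fin d) :
    EqOn (coordPDeriv d i (coordPDeriv d j f)) (coordPDeriv d j (coordPDeriv d i f)) U := by
  intro x hx
  have hfx : ContDiffAt ℝ ∞ f x := hf.contDiffAt (hU.mem_nhds hx)
  have htwo : ((2 : ℕ∞) : WithTop ℕ∞) ≤ ∞ := WithTop.coe_le_coe.2 le_top
  have hf' : DifferentiableAt ℝ (fderiv ℝ f) x :=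
    (hfx.fderiv_right (m := 1) htwo).differentiableAt one_ne_zero
  have hsecond : ∀ v w, fderiv ℝ (fun y => fderiv ℝ f y w) x v = fderiv ℝ (fderiv ℝ f) x v w :=
    fun v w => by simp [fderiv_clm_apply hf' (differentiableAt_const w)]
  unfold coordPDeriv
  rw [hsecond, hsecond, (hfx.isSymmSndFDerivAt (by simpa using htwo)).eq]

theorem coordPDeriv_iterate_comm (hU : IsOpen U) (hf : ContDiffOn ℝ ∞ f U) (i j : Fin d)
    (n : ℕ) :
    EqOn (coordPDeriv d i ((coordPDeriv d j)^[n] f)) ((coordPDeriv d j)^[n] (coordPDeriv d i f))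
      U := by
  induction n with
  | zero => exact fun _ _ => rfl
  | succ n ih =>
    simp only [iterate_succ_apply']
    exact (coordPDeriv_comm hU (contDiffOn_coordPDeriv_iterate hU hf j n) i j).trans
      (eqOn_coordPDeriv hU ih j)

/-- `multiPDeriv d α` is the case `l = List.finRange d`; arbitrary lists make the commutation
argument below an induction on `l`. -/
noncomputable def listMultiPDeriv (d : ℕ) (l : List (Fin d)) (α : Fin d → ℕ)
    (f : EuclideanSpace ℝ (Fin d) → EuclideanSpace ℝ (Fin d)) :
    EuclideanSpace ℝ (Fin d) → EuclideanSpace ℝ (Fin d) :=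
  l.foldr (fun i g => (coordPDeriv d i)^[α i] g) f

theorem contDiffOn_listMultiPDeriv (hU : IsOpen U) (hf : ContDiffOn ℝ ∞ f U) (l : List (Fin d))
    (α : Fin d → ℕ) : ContDiffOn ℝ ∞ (listMultiPDeriv d l α f) U := by
  induction l with
  | nil => exact hf
  | cons i l ih => exact contDiffOn_coordPDeriv_iterate hU ih i (α i)

theorem listMultiPDeriv_update_of_notMem {l : List (Fin d)} {i : Fin d} (hi : i ∉ l)
    (α : Fin d → ℕ) (b : ℕ) : listMultiPDeriv d l (update α i b) f = listMultiPDeriv d l α f := by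
  induction l with
  | nil => rfl
  | cons j l ih =>
    rw [List.mem_cons, not_or] at hi
    simp only [listMultiPDeriv, List.foldr_cons] at ih ⊢
    rw [update_of_ne (Ne.symm hi.1), ih hi.2]

theorem coordPDeriv_listMultiPDeriv (hU : IsOpen U) (hf : ContDiffOn ℝ ∞ f U) {l : List (Fin d)}
    (hl : l.Nodup) {i : Fin d} (hi : i ∈ l) (α : Fin d → ℕ) :
    EqOn (coordPDeriv d i (listMultiPDeriv d l α f))
      (listMultiPDeriv d l (update α i (α i + 1)) f) U := by
  induction l with
  | nil => simp at hi
  | cons j l ih =>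
    rw [List.nodup_cons] at hl
    simp only [listMultiPDeriv, List.foldr_cons] at ih ⊢
    by_cases hji : j = i
    · subst hji
      rw [update_self, iterate_succ_apply', ← listMultiPDeriv, ← listMultiPDeriv,
        listMultiPDeriv_update_of_notMem hl.1]
      exact fun _ _ => rfl
    · rw [update_of_ne hji]
      have hil : i ∈ l := (List.mem_cons.1 hi).resolve_left (Ne.symm hji)
      exact (coordPDeriv_iterate_comm hU (contDiffOn_listMultiPDeriv hU hf l α) i j (α j)).trans
        (eqOn_coordPDeriv_iterate hU (ih hl.2 hil) j (α j))

theorem contDiffOn_multiPDeriv (hU : IsOpen U) (hf : ContDiffOn ℝ ∞ f U) (α : Fin d → ℕ) :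
    ContDiffOn ℝ ∞ (multiPDeriv d α f) U :=
  contDiffOn_listMultiPDeriv hU hf _ α

theorem coordPDeriv_multiPDeriv (hU : IsOpen U) (hf : ContDiffOn ℝ ∞ f U) (α : Fin d → ℕ)
    (i : Fin d) :
    EqOn (coordPDeriv d i (multiPDeriv d α f)) (multiPDeriv d (update α i (α i + 1)) f) U :=
  coordPDeriv_listMultiPDeriv hU hf (List.nodup_finRange d) (List.mem_finRange i) α

theorem multiPDeriv_zero (f : EuclideanSpace ℝ (Fin d) → EuclideanSpace ℝ (Fin d)) :
    multiPDeriv d 0 f = f := by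
  simp [multiPDeriv]

end PartialDerivatives

section HomogeneousTaylor

variable {d : ℕ}

theorem sum_update_add_self (α : Fin d → ℕ) (i : Fin d) (b : ℕ) :
    ∑ j, update α i b j + α i = ∑ j, α j + b := by
  rw [sum_update_of_mem (mem_univ i), sum_eq_add_sum_sdiff_singleton_of_mem (mem_univ i) α]
  ring

theorem sum_antidiagonalTuple_update_succ {M : Type*} [AddCommMonoid M] (i : Fin d) (m : ℕ)
    (H : (Fin d → ℕ) → M) (hH : ∀ β, β i = 0 → H β = 0) :
    ∑ α ∈ Nat.antidiagonalTuple d m, H (update α i (α i + 1)) =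
      ∑ β ∈ Nat.antidiagonalTuple d (m + 1), H β := by
  rw [← sum_filter_of_ne fun β _ hβ => mt (hH β) hβ]
  refine sum_nbij' (fun α => update α i (α i + 1)) (fun β => update β i (β i - 1)) ?_ ?_ ?_ ?_
    fun _ _ => rfl
  · intro α hα
    have := sum_update_add_self α i (α i + 1)
    simp only [mem_filter, Nat.mem_antidiagonalTuple, update_self] at hα ⊢
    omega
  · intro β hβ
    have := sum_update_add_self β i (β i - 1)
    simp only [mem_filter, Nat.mem_antidiagonalTuple] at hβ ⊢
    omega
  · intro α _
    simp
  · intro β hβ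
    rw [mem_filter] at hβ
    simp [Nat.sub_add_cancel (Nat.one_le_iff_ne_zero.2 hβ.2)]

theorem sum_filter_fin_eq_sum_range_antidiagonalTuple {M : Type*} [AddCommMonoid M] (k : ℕ)
    (F : (Fin d → ℕ) → M) :
    ∑ α ∈ univ.filter (fun α : Fin d → Fin (k + 1) => ∑ i, (α i : ℕ) ≤ k), F (fun i => α i) =
      ∑ m ∈ range (k + 1), ∑ β ∈ Nat.antidiagonalTuple d m, F β := by
  rw [sum_sigma']
  refine sum_bij (fun α _ => ⟨∑ i, (α i : ℕ), fun i => α i⟩) ?_ ?_ ?_ fun _ _ => rfl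
  · intro α hα
    simp only [mem_filter, mem_univ, true_and] at hα
    simp [Nat.lt_succ_of_le hα, Nat.mem_antidiagonalTuple]
  · intro α _ α' _ h
    funext i
    exact Fin.ext (congrFun (eq_of_heq (Sigma.mk.inj h).2) i)
  · rintro ⟨m, β⟩ hβ
    simp only [mem_sigma, mem_range, Nat.mem_antidiagonalTuple] at hβ
    have hle : ∀ i, β i < k + 1 := fun i =>
      ((single_le_sum (fun j _ => Nat.zero_le (β j)) (mem_univ i)).trans_lt (hβ.2 ▸ hβ.1))
    refine ⟨fun i => ⟨β i, hle i⟩, ?_, ?_⟩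
    · simp [hβ.2, Nat.le_of_lt_succ hβ.1]
    · simp [hβ.2]

variable {U : Set (EuclideanSpace ℝ (Fin d))}
  {f : EuclideanSpace ℝ (Fin d) → EuclideanSpace ℝ (Fin d)}

noncomputable def taylorWeight (h : EuclideanSpace ℝ (Fin d)) (α : Fin d → ℕ) : ℝ :=
  (∏ i, h i ^ α i) * ((∏ i, (α i)! : ℕ) : ℝ)⁻¹

noncomputable def homogeneousTaylor (d : ℕ)
    (f : EuclideanSpace ℝ (Fin d) → EuclideanSpace ℝ (Fin d)) (h : EuclideanSpace ℝ (Fin d))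
    (m : ℕ) (x : EuclideanSpace ℝ (Fin d)) : EuclideanSpace ℝ (Fin d) :=
  ∑ α ∈ Nat.antidiagonalTuple d m, taylorWeight h α • multiPDeriv d α f x

theorem mul_taylorWeight (h : EuclideanSpace ℝ (Fin d)) (α : Fin d → ℕ) (i : Fin d) :
    h i * taylorWeight h α = (α i + 1 : ℕ) * taylorWeight h (update α i (α i + 1)) := by
  have hpow := prod_update_of_mem (mem_univ i) (fun j => h j ^ α j) (h i ^ (α i + 1))
  have hfac := prod_update_of_mem (mem_univ i) (fun j => (α j)!) (α i + 1)!
  simp only [← apply_update (fun j n => h j ^ n), ← apply_update (fun j n => n !)] at hpow hfac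
  rw [taylorWeight, taylorWeight, hpow, hfac, prod_eq_mul_prod_sdiff_singleton_of_mem (mem_univ i),
    prod_eq_mul_prod_sdiff_singleton_of_mem (mem_univ i) (fun j => (α j)!), Nat.factorial_succ]
  push_cast
  field_simp
  ring

theorem homogeneousTaylor_zero (h x : EuclideanSpace ℝ (Fin d)) :
    homogeneousTaylor d f h 0 x = f x := by
  simp [homogeneousTaylor, Nat.antidiagonalTuple_zero_right, multiPDeriv_zero, taylorWeight]

theorem homogeneousTaylor_zero_succ (m : ℕ) (x : EuclideanSpace ℝ (Fin d)) :
    homogeneousTaylor d f 0 (m + 1) x = 0 := by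
  refine sum_eq_zero fun α hα => ?_
  obtain ⟨i, hi⟩ : ∃ i, α i ≠ 0 := by
    by_contra! h0
    simp [h0, Nat.mem_antidiagonalTuple] at hα
  have hmonomial : ∏ j, (0 : EuclideanSpace ℝ (Fin d)) j ^ α j = 0 :=
    prod_eq_zero (mem_univ i) (by simp [hi])
  rw [taylorWeight, hmonomial, zero_mul, zero_smul]

theorem hasDerivAt_homogeneousTaylor_comp_line (hU : IsOpen U) (hf : ContDiffOn ℝ ∞ f U)
    (y h : EuclideanSpace ℝ (Fin d)) (m : ℕ) {t : ℝ} (ht : y + t • h ∈ U) :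
    HasDerivAt (fun s : ℝ => homogeneousTaylor d f h m (y + s • h))
      ((m + 1 : ℝ) • homogeneousTaylor d f h (m + 1) (y + t • h)) t := by
  set x := y + t • h
  have hline : HasDerivAt (fun s : ℝ => y + s • h) h t := by
    simpa using ((hasDerivAt_id t).smul_const h).const_add y
  have hterm : ∀ α ∈ Nat.antidiagonalTuple d m,
      HasDerivAt (fun s : ℝ => taylorWeight h α • multiPDeriv d α f (y + s • h))
        (taylorWeight h α • fderiv ℝ (multiPDeriv d α f) x h) t := fun α _ =>
    ((((contDiffOn_multiPDeriv hU hf α).differentiableOn (by simp)).differentiableAt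
      (hU.mem_nhds ht)).hasFDerivAt.comp_hasDerivAt t hline).fun_const_smul _
  refine (HasDerivAt.fun_sum hterm).congr_deriv ?_
  calc ∑ α ∈ Nat.antidiagonalTuple d m, taylorWeight h α • fderiv ℝ (multiPDeriv d α f) x h
      = ∑ α ∈ Nat.antidiagonalTuple d m, ∑ i,
          (h i * taylorWeight h α) • multiPDeriv d (update α i (α i + 1)) f x := by
        refine sum_congr rfl fun α _ => ?_
        rw [fderiv_apply_eq_sum_coordPDeriv, smul_sum]
        refine sum_congr rfl fun i _ => ?_
        rw [coordPDeriv_multiPDeriv hU hf α i ht, smul_smul, mul_comm]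
    _ = ∑ i, ∑ β ∈ Nat.antidiagonalTuple d (m + 1),
          ((β i : ℝ) * taylorWeight h β) • multiPDeriv d β f x := by
        rw [sum_comm]
        refine sum_congr rfl fun i _ => ?_
        rw [← sum_antidiagonalTuple_update_succ i m _ fun β hβ => by simp [hβ]]
        refine sum_congr rfl fun α _ => ?_
        rw [mul_taylorWeight, update_self]
    _ = (m + 1 : ℝ) • homogeneousTaylor d f h (m + 1) x := by
        rw [sum_comm, homogeneousTaylor, smul_sum]
        refine sum_congr rfl fun β hβ => ?_
        rw [← sum_smul, ← sum_mul, ← mul_smul, ← Nat.cast_sum, Nat.mem_antidiagonalTuple.1 hβ]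
        push_cast
        rfl

end HomogeneousTaylor

theorem iteratedDeriv_ofReal_eq {E : Type*} [NormedAddCommGroup E] [NormedSpace ℂ E]
    [CompleteSpace E] {F : ℂ → E} {V : Set ℂ} (hV : IsOpen V) (hF : DifferentiableOn ℂ F V)
    {S : Set ℝ} (hS : IsOpen S) (hSV : ∀ s ∈ S, (s : ℂ) ∈ V) (G : ℕ → ℝ → E)
    (hG₀ : ∀ s ∈ S, F s = G 0 s) (hG : ∀ n, ∀ s ∈ S, HasDerivAt (G n) (G (n + 1) s) s)
    (n : ℕ) : ∀ s ∈ S, iteratedDeriv n F s = G n s := by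
  induction n with
  | zero => simpa using hG₀
  | succ n ih =>
    intro s hs
    have hcomplex : HasDerivAt (iteratedDeriv n F) (deriv (iteratedDeriv n F) s) s := by
      rw [iteratedDeriv_eq_iterate]
      exact ((hF.analyticOnNhd hV).iterated_deriv n s (hSV s hs)).differentiableAt.hasDerivAt
    have hreal : HasDerivAt (G n) (deriv (iteratedDeriv n F) s) s := by
      have h := hcomplex.scomp s (Complex.ofRealCLM.hasDerivAt (x := s))
      rw [Complex.ofRealCLM_apply, Complex.ofReal_one, one_smul] at h
      exact h.congr_of_eventuallyEq (Filter.eventuallyEq_of_mem (hS.mem_nhds hs) fun u hu =>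
        (ih u hu).symm)
    rw [iteratedDeriv_succ]
    exact hreal.unique (hG n s hs)

theorem Real.sq_rpow_neg_natCast_div_two {x : ℝ} (hx : 0 ≤ x) (n : ℕ) :
    (x ^ 2) ^ (-(n : ℝ) / 2) = (x ^ n)⁻¹ := by
  rw [← Real.rpow_natCast x 2, ← Real.rpow_mul hx, show ((2 : ℕ) : ℝ) * (-(n : ℝ) / 2) = -n by
    push_cast; ring, Real.rpow_neg hx, Real.rpow_natCast]

section Complexification

variable {d : ℕ} {y h : EuclideanSpace ℝ (Fin d)}

noncomputable def complexify (d : ℕ) :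
    EuclideanSpace ℝ (Fin d) →ₗᵢ[ℝ] EuclideanSpace ℂ (Fin d) where
  toFun x := WithLp.toLp 2 fun j => (x j : ℂ)
  map_add' x y := by ext; simp
  map_smul' r x := by ext; simp
  norm_map' _ := by simp [EuclideanSpace.norm_eq]

theorem ofReal_smul_complexify (r : ℝ) (x : EuclideanSpace ℝ (Fin d)) :
    (r : ℂ) • complexify d x = complexify d (r • x) := by
  rw [map_smul, Complex.coe_smul]

theorem contDiffOn_gravKernel : ContDiffOn ℝ ∞ (gravKernel d) {0}ᶜ := fun _ hx =>
  (((contDiffAt_id.norm ℝ hx).pow d).inv (pow_ne_zero _ (norm_ne_zero_iff.2 hx))).smul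
    contDiffAt_id |>.contDiffWithinAt

theorem add_smul_ne_zero {s : ℝ} (hs : |s| * ‖h‖ < ‖y‖) : y + s • h ≠ 0 := by
  rw [← norm_pos_iff]
  calc 0 < ‖y‖ - ‖s • h‖ := by rwa [norm_smul, Real.norm_eq_abs, sub_pos]
    _ ≤ ‖y + s • h‖ := by simpa using norm_sub_norm_le y (-(s • h))

/-- The polynomial extension of `s ↦ ‖y + s • h‖ ^ 2` to complex `s`. -/
noncomputable def complexNormSq (y h : EuclideanSpace ℝ (Fin d)) (t : ℂ) : ℂ :=
  (‖y‖ : ℂ) ^ 2 + 2 * t * (inner ℝ y h : ℂ) + t ^ 2 * (‖h‖ : ℂ) ^ 2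

theorem complexNormSq_ofReal (s : ℝ) : complexNormSq y h s = ((‖y + s • h‖ ^ 2 : ℝ) : ℂ) := by
  rw [complexNormSq, norm_add_sq_real, real_inner_smul_right, norm_smul, Real.norm_eq_abs, mul_pow,
    sq_abs]
  push_cast
  ring

theorem sq_le_re_complexNormSq {t : ℂ} (ht : 3 * ‖t‖ * ‖h‖ ≤ ‖y‖) :
    (‖y‖ / 3) ^ 2 ≤ (complexNormSq y h t).re := by
  have hre : (complexNormSq y h t).re =
      ‖y‖ ^ 2 + 2 * t.re * inner ℝ y h + (t.re ^ 2 - t.im ^ 2) * ‖h‖ ^ 2 := by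
    simp [complexNormSq, pow_two]
  have hinner : |2 * t.re * inner ℝ y h| ≤ 2 * (‖t‖ * ‖h‖) * ‖y‖ := by
    rw [abs_mul, abs_mul, abs_two]
    have := abs_real_inner_le_norm y h
    have := Complex.abs_re_le_norm t
    calc 2 * |t.re| * |inner ℝ y h| ≤ 2 * ‖t‖ * (‖y‖ * ‖h‖) := by gcongr
      _ = _ := by ring
  have hsq : -(‖t‖ * ‖h‖) ^ 2 ≤ (t.re ^ 2 - t.im ^ 2) * ‖h‖ ^ 2 := by
    rw [mul_pow, Complex.sq_norm, Complex.normSq_apply]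
    nlinarith [mul_nonneg (sq_nonneg t.re) (sq_nonneg ‖h‖)]
  have hu : 0 ≤ ‖t‖ * ‖h‖ := by positivity
  rw [hre]
  nlinarith [abs_le.1 hinner]

end Complexification

section GravKernelOnComplexLine

variable {d : ℕ} {y h : EuclideanSpace ℝ (Fin d)} {R : ℝ}

/-- The holomorphic extension of `s ↦ gravKernel d (y + s • h)` to complex `s` near `0`; the
power is the principal branch, which is harmless since `complexNormSq y h` has positive real part
on the discs used below. -/
noncomputable def gravKernelLine (d : ℕ) (y h : EuclideanSpace ℝ (Fin d)) (t : ℂ) :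
    EuclideanSpace ℂ (Fin d) :=
  complexNormSq y h t ^ (-(d : ℂ) / 2) • (complexify d y + t • complexify d h)

theorem neg_natCast_div_two_eq_ofReal : -(d : ℂ) / 2 = ((-(d : ℝ) / 2 : ℝ) : ℂ) := by
  push_cast; rfl

theorem gravKernelLine_ofReal (s : ℝ) :
    gravKernelLine d y h s = complexify d (gravKernel d (y + s • h)) := by
  rw [gravKernelLine, complexNormSq_ofReal, neg_natCast_div_two_eq_ofReal,
    ← Complex.ofReal_cpow (by positivity), Real.sq_rpow_neg_natCast_div_two (norm_nonneg _),
    ofReal_smul_complexify, ← map_add, ofReal_smul_complexify, gravKernel]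

theorem three_mul_norm_mul_norm_le_of_mem_closedBall {t : ℂ} (hR : 3 * R * ‖h‖ ≤ ‖y‖)
    (ht : t ∈ closedBall 0 R) :
    3 * ‖t‖ * ‖h‖ ≤ ‖y‖ :=
  le_trans (by gcongr; simpa using ht) hR

theorem differentiableOn_gravKernelLine (hy : y ≠ 0) (hR : 3 * R * ‖h‖ ≤ ‖y‖) :
    DifferentiableOn ℂ (gravKernelLine d y h) (closedBall 0 R) := by
  intro t ht
  have hre := sq_le_re_complexNormSq (three_mul_norm_mul_norm_le_of_mem_closedBall hR ht)
  have hslit : complexNormSq y h t ∈ Complex.slitPlane :=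
    Complex.mem_slitPlane_iff.2 (Or.inl (lt_of_lt_of_le (by positivity) hre))
  have hQ : DifferentiableAt ℂ (complexNormSq y h) t := by
    unfold complexNormSq; fun_prop
  exact ((hQ.cpow_const hslit).smul ((differentiableAt_id.smul_const _).const_add _))
    |>.differentiableWithinAt

theorem norm_gravKernelLine_le (hy : y ≠ 0) (hR : 3 * R * ‖h‖ ≤ ‖y‖) {t : ℂ}
    (ht : t ∈ closedBall 0 R) :
    ‖gravKernelLine d y h t‖ ≤ ((‖y‖ / 3) ^ d)⁻¹ * (4 / 3 * ‖y‖) := by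
  have hth := three_mul_norm_mul_norm_le_of_mem_closedBall hR ht
  have hQ : (‖y‖ / 3) ^ 2 ≤ ‖complexNormSq y h t‖ :=
    (sq_le_re_complexNormSq hth).trans (Complex.re_le_norm _)
  rw [gravKernelLine, norm_smul, neg_natCast_div_two_eq_ofReal, Complex.norm_cpow_real,
    ← Real.sq_rpow_neg_natCast_div_two (by positivity : 0 ≤ ‖y‖ / 3)]
  refine mul_le_mul (Real.rpow_le_rpow_of_nonpos (by positivity) hQ ?_) ?_ (norm_nonneg _)
    (by positivity)
  · linarith [d.cast_nonneg (α := ℝ)]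
  · calc ‖complexify d y + t • complexify d h‖ ≤ ‖y‖ + ‖t‖ * ‖h‖ := by
          simpa [norm_smul] using norm_add_le (complexify d y) (t • complexify d h)
      _ ≤ 4 / 3 * ‖y‖ := by linarith

end GravKernelOnComplexLine

section TaylorRemainder

variable {d : ℕ} {y h : EuclideanSpace ℝ (Fin d)} {R : ℝ}

theorem iteratedDeriv_gravKernelLine_zero (hy : y ≠ 0) (hR : 3 * R * ‖h‖ ≤ ‖y‖) (hR₀ : 0 < R)
    (n : ℕ) : iteratedDeriv n (gravKernelLine d y h) 0 =
      complexify d ((n ! : ℝ) • homogeneousTaylor d (gravKernel d) h n y) := by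
  have hline : ∀ s ∈ ball (0 : ℝ) R, y + s • h ∈ ({0}ᶜ : Set _) := fun s hs =>
    add_smul_ne_zero <| by
      rw [mem_ball_zero_iff, Real.norm_eq_abs] at hs
      nlinarith [norm_pos_iff.2 hy, norm_nonneg h]
  simpa using iteratedDeriv_ofReal_eq isOpen_ball
    ((differentiableOn_gravKernelLine hy hR).mono ball_subset_closedBall) isOpen_ball
    (fun s hs => by simpa using hs)
    (fun n s => complexify d ((n ! : ℝ) • homogeneousTaylor d (gravKernel d) h n (y + s • h)))
    (fun s _ => by simp [gravKernelLine_ofReal, homogeneousTaylor_zero])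
    (fun n s hs => by
      refine ((complexify d).toContinuousLinearMap.hasFDerivAt.comp_hasDerivAt s
        ((hasDerivAt_homogeneousTaylor_comp_line isOpen_compl_singleton contDiffOn_gravKernel
          y h n (hline s hs)).const_smul (n ! : ℝ))).congr_deriv ?_
      simp [smul_smul, Nat.factorial_succ]; ring_nf)
    n 0 (mem_ball_self hR₀)

theorem norm_gravKernel_add_sub_sum_homogeneousTaylor_le (hy : y ≠ 0) (hR : 1 < R)
    (hRh : 3 * R * ‖h‖ ≤ ‖y‖) (N : ℕ) :
    ‖gravKernel d (y + h) - ∑ m ∈ range N, homogeneousTaylor d (gravKernel d) h m y‖ ≤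
      ((‖y‖ / 3) ^ d)⁻¹ * (4 / 3 * ‖y‖) * (1 / R) ^ N / (1 - 1 / R) := by
  have hR₀ : 0 < R := by linarith
  have hcauchy := Complex.norm_sub_sum_taylorSeries_le
    ((differentiableOn_gravKernelLine hy hRh).diffContOnCl_ball subset_rfl)
    (fun t ht => norm_gravKernelLine_le hy hRh (sphere_subset_closedBall ht))
    (w := 1) (by simpa using hR) N
  have hone : gravKernelLine d y h 1 = complexify d (gravKernel d (y + h)) := by
    simpa using gravKernelLine_ofReal (y := y) (h := h) 1
  have hterm : ∀ n, (n ! : ℂ)⁻¹ • iteratedDeriv n (gravKernelLine d y h) 0 =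
      complexify d (homogeneousTaylor d (gravKernel d) h n y) := fun n => by
    rw [iteratedDeriv_gravKernelLine_zero hy hRh hR₀, ← ofReal_smul_complexify,
      Complex.ofReal_natCast, inv_smul_smul₀ (Nat.cast_ne_zero.2 n.factorial_ne_zero)]
  simp only [sub_zero, norm_one, one_pow, one_smul, hone, hterm, ← map_sum, ← map_sub,
    LinearIsometry.norm_map] at hcauchy
  simpa only [one_div] using hcauchy

theorem norm_gravKernel_add_sub_sum_homogeneousTaylor_le_of_six_mul_le (hd : d ≠ 0) (hy : y ≠ 0)
    (hh : 6 * ‖h‖ ≤ ‖y‖) (k : ℕ) :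
    ‖gravKernel d (y + h) - ∑ m ∈ range (k + 1), homogeneousTaylor d (gravKernel d) h m y‖ ≤
      3 ^ (d + 1) / ‖y‖ ^ (d - 1) * (3 * ‖h‖ / ‖y‖) ^ (k + 1) := by
  rcases eq_or_ne h 0 with rfl | h0
  · simp [sum_range_succ', homogeneousTaylor_zero_succ, homogeneousTaylor_zero]
  have ha : 0 < ‖y‖ := norm_pos_iff.2 hy
  have hR : 1 < ‖y‖ / (3 * ‖h‖) := by
    rw [lt_div_iff₀ (by positivity)]
    linarith [norm_pos_iff.2 h0]
  refine (norm_gravKernel_add_sub_sum_homogeneousTaylor_le hy hR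
    (le_of_eq (by field_simp)) (k + 1)).trans ?_
  rw [one_div_div]
  set q := 3 * ‖h‖ / ‖y‖
  have hq : q ≤ 1 / 2 := by
    rw [div_le_iff₀ ha]
    linarith
  have hM : ((‖y‖ / 3) ^ d)⁻¹ * (4 / 3 * ‖y‖) = 4 * (3 ^ (d - 1) / ‖y‖ ^ (d - 1)) := by
    rw [div_pow, ← pow_sub_one_mul hd ‖y‖, ← pow_sub_one_mul hd (3 : ℝ)]
    field_simp
  have hfactor : 4 / (1 - q) ≤ 9 := by
    rw [div_le_iff₀ (by linarith)]
    linarith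
  calc ((‖y‖ / 3) ^ d)⁻¹ * (4 / 3 * ‖y‖) * q ^ (k + 1) / (1 - q)
      = 4 / (1 - q) * (3 ^ (d - 1) / ‖y‖ ^ (d - 1)) * q ^ (k + 1) := by rw [hM]; ring
    _ ≤ 9 * (3 ^ (d - 1) / ‖y‖ ^ (d - 1)) * q ^ (k + 1) := by gcongr
    _ = 3 ^ (d + 1) / ‖y‖ ^ (d - 1) * q ^ (k + 1) := by
      rw [show d + 1 = d - 1 + 2 by omega]
      ring

end TaylorRemainder

theorem homogeneousTaylor_gravKernel_sub {d : ℕ} (y z : EuclideanSpace ℝ (Fin d)) (m : ℕ) :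
    homogeneousTaylor d (gravKernel d) (z - y) m y =
      ∑ α ∈ Nat.antidiagonalTuple d m, (∏ i, (z i - y i) ^ α i) • taylorCoeff d α y := by
  simp only [homogeneousTaylor, taylorWeight, taylorCoeff, mul_smul, WithLp.ofLp_sub,
    Pi.sub_apply]

/-- Let `d ≥ 3`. There exists a constant `C > 0` depending only on `d` such
that for every integer `k ≥ 1`, every `y ∈ ℝ^d∖{0}`, and every `z ∈ ℝ^d` with
`|z - y| ≤ |y|/C`, one has
`|g(z) - Σ_{|α| ≤ k} a_α·(z-y)^α| ≤ (C·k^d/|y|^{d-1})·(2d·|z-y|/|y|)^{k+1}`,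
where the sum is over multi-indices `α` with `|α| ≤ k` (each such multi-index has all entries
`≤ k`, so they are enumerated by functions `Fin d → Fin (k+1)`). -/
theorem gravKernel_taylor_remainder_bound (d : ℕ) (hd : 3 ≤ d) :
    ∃ C : ℝ, 0 < C ∧
      ∀ k : ℕ, 1 ≤ k →
      ∀ y : EuclideanSpace ℝ (Fin d), y ≠ 0 →
      ∀ z : EuclideanSpace ℝ (Fin d), ‖z - y‖ ≤ ‖y‖ / C →
        ‖gravKernel d z -
            ∑ α ∈ Finset.univ.filter (fun α : Fin d → Fin (k + 1) => ∑ i, (α i : ℕ) ≤ k),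
              (∏ i, (z i - y i) ^ (α i : ℕ)) • taylorCoeff d (fun i => (α i : ℕ)) y‖ ≤
          C * k ^ d / ‖y‖ ^ (d - 1) * (2 * d * ‖z - y‖ / ‖y‖) ^ (k + 1) := by
  refine ⟨3 ^ (d + 1), by positivity, fun k hk y hy z hz => ?_⟩
  have hC : (6 : ℝ) ≤ 3 ^ (d + 1) :=
    le_trans (by norm_num) (pow_le_pow_right₀ (by norm_num : (1 : ℝ) ≤ 3) (by omega : 2 ≤ d + 1))
  have hsmall : 6 * ‖z - y‖ ≤ ‖y‖ := by
    rw [le_div_iff₀ (by positivity)] at hz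
    nlinarith [norm_nonneg (z - y)]
  rw [sum_filter_fin_eq_sum_range_antidiagonalTuple k
    fun α => (∏ i, (z i - y i) ^ α i) • taylorCoeff d α y]
  simp only [← homogeneousTaylor_gravKernel_sub]
  nth_rw 1 [← add_sub_cancel y z]
  refine (norm_gravKernel_add_sub_sum_homogeneousTaylor_le_of_six_mul_le (by omega) hy hsmall
    k).trans ?_
  have hkd : (1 : ℝ) ≤ k ^ d := one_le_pow₀ (by exact_mod_cast hk)
  have hd' : (3 : ℝ) ≤ 2 * d := by
    have : (3 : ℝ) ≤ d := by exact_mod_cast hd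
    linarith
  gcongr
  exact le_mul_of_one_le_right (by positivity) hkd
end

section
/- Let d ≥ 3 and q > 0, and let A ⊆ {z ∈ ℝ^d : q ≤ |z| ≤ 8q} be a measurable set with Vol(A) > 0. Let N be a Poisson random variable with mean Vol(A), and let (Z_i)_{i≥1} be i.i.d. random vectors uniformly distributed on A and independent of N. Then there exist constants C, c, c' > 0 depending only on d such that for all t with 0 < t ≤ c'·q, P(|Σ_{i=1}^N Z_i/|Z_i|^d - ∫_A z/|z|^d dz| ≥ t) ≤ C·exp(-c·q^{d-2}·t²). -/
/-!
The force is the linear statistic `∑_{i<N} F (Z i)`, `F z = z / |z|^d`, of a Poisson point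
process of intensity `Vol` restricted to `A`, so Campbell's formula computes its exponential
moments exactly: `E exp (∑ h (Z i)) = exp ∫_A (e^h - 1)`. On the annulus every coordinate of `F` is
bounded by `b = q^(1-d)` and has second moment at most `Vol(A) b² ≲ q^(2-d)`. As
`e^x - 1 ≤ x + x²` for `|x| ≤ 1`, a Chernoff bound with `θ ≍ q^(d-2) t` gives each coordinate the
tail `exp (-c q^(d-2) t²)` as long as `θ b ≤ 1`, i.e. `t ≲ q`; a union bound over the `2d` signed
coordinates finishes.
-/

open MeasureTheory ProbabilityTheory Finset
open scoped ENNReal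

lemma lintegral_comp_eq_tsum_of_indepFun {Ω α β : Type*} {mΩ : MeasurableSpace Ω}
    {P : Measure Ω} [IsFiniteMeasure P] [MeasurableSpace α] [Countable α]
    [MeasurableSingletonClass α] [MeasurableSpace β] {X : Ω → α} {Y : Ω → β}
    (hX : Measurable X) (hY : Measurable Y) (hXY : IndepFun X Y P)
    {F : α → β → ℝ≥0∞} (hF : ∀ a, Measurable (F a)) :
    ∫⁻ ω, F (X ω) (Y ω) ∂P = ∑' a, P (X ⁻¹' {a}) * ∫⁻ ω, F a (Y ω) ∂P := by
  have hFm : Measurable (Function.uncurry F) := measurable_from_prod_countable_right hF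
  calc ∫⁻ ω, F (X ω) (Y ω) ∂P
      = ∫⁻ p, Function.uncurry F p ∂(P.map X).prod (P.map Y) := by
        rw [← hXY.map_prod_eq_prod_map_map hX.aemeasurable hY.aemeasurable,
          lintegral_map hFm (hX.prodMk hY)]
        rfl
    _ = ∑' a, (∫⁻ b, F a b ∂P.map Y) * P.map X {a} :=
        (lintegral_prod _ hFm.aemeasurable).trans (lintegral_countable' _)
    _ = ∑' a, P (X ⁻¹' {a}) * ∫⁻ ω, F a (Y ω) ∂P := by
        simp_rw [Measure.map_apply hX (measurableSet_singleton _), lintegral_map (hF _) hY,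
          mul_comm]

lemma lintegral_prod_range_comp_eq_pow {Ω D : Type*} {mΩ : MeasurableSpace Ω}
    {P : Measure Ω} [MeasurableSpace D] {Z : ℕ → Ω → D} {ν : Measure D}
    (hZ : ∀ i, Measurable (Z i)) (hind : iIndepFun Z P) (hlaw : ∀ i, P.map (Z i) = ν)
    {f : D → ℝ≥0∞} (hf : Measurable f) (n : ℕ) :
    ∫⁻ ω, ∏ i ∈ range n, f (Z i ω) ∂P = (∫⁻ z, f z ∂ν) ^ n := by
  rw [lintegral_prod_eq_prod_lintegral_of_indepFun _ (fun i ω ↦ f (Z i ω))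
    (hind.comp _ fun _ ↦ hf) fun i ↦ hf.comp (hZ i)]
  simp_rw [← lintegral_map hf (hZ _), hlaw, prod_const, card_range]

lemma OrthonormalBasis.exists_div_sqrt_card_le_abs_inner {ι E : Type*} [Fintype ι]
    [NormedAddCommGroup E] [InnerProductSpace ℝ E] (e : OrthonormalBasis ι ℝ E)
    {x : E} {t : ℝ} (ht : 0 < t) (hx : t ≤ ‖x‖) :
    ∃ i, t / √(Fintype.card ι) ≤ |inner ℝ (e i) x| := by
  have hle := e.norm_le_card_mul_iSup_norm_inner x
  have : Nonempty ι := by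
    by_contra h
    rw [not_nonempty_iff] at h
    simp only [Real.iSup_of_isEmpty, mul_zero] at hle
    linarith
  obtain ⟨i, hi⟩ := exists_eq_ciSup_of_finite (f := fun i ↦ ‖inner ℝ (e i) x‖)
  refine ⟨i, (div_le_iff₀' (by positivity)).2 ?_⟩
  rw [← Real.norm_eq_abs, hi]
  exact hx.trans hle

/-- `(Z i)_{i < N}` is a Poisson point process of intensity `μ`. -/
structure IsPoissonSample {Ω D : Type*} {mΩ : MeasurableSpace Ω} [MeasurableSpace D]
    (μ : Measure D) (P : Measure Ω) (N : Ω → ℕ) (Z : ℕ → Ω → D) : Prop where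
  measurable_count : Measurable N
  measurable_sample : ∀ i, Measurable (Z i)
  measure_count_eq : ∀ n : ℕ, P {ω | N ω = n} =
    ENNReal.ofReal (Real.exp (-(μ Set.univ).toReal) * (μ Set.univ).toReal ^ n / n.factorial)
  map_sample : ∀ i, P.map (Z i) = (μ Set.univ)⁻¹ • μ
  iIndepFun_sample : iIndepFun Z P
  indepFun_count_sample : IndepFun N (fun ω i ↦ Z i ω) P

namespace IsPoissonSample

variable {Ω D : Type*} {mΩ : MeasurableSpace Ω} [MeasurableSpace D] {μ : Measure D}
  {P : Measure Ω} {N : Ω → ℕ} {Z : ℕ → Ω → D}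

lemma measurable_sum (hP : IsPoissonSample μ P N Z) {g : D → ℝ} (hg : Measurable g) :
    Measurable fun ω ↦ ∑ i ∈ range (N ω), g (Z i ω) := by
  have : Measurable fun p : ℕ × (ℕ → D) ↦ ∑ i ∈ range p.1, g (p.2 i) :=
    measurable_from_prod_countable_right fun n ↦ by dsimp only; fun_prop
  exact this.comp (hP.measurable_count.prodMk (measurable_pi_lambda _ hP.measurable_sample))

variable [IsProbabilityMeasure P]

lemma inv_measure_univ_mul (hP : IsPoissonSample μ P N Z) :
    (μ Set.univ)⁻¹ * μ Set.univ = 1 := by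
  have := Measure.isProbabilityMeasure_map (μ := P) (hP.measurable_sample 0).aemeasurable
  rw [hP.map_sample 0] at this
  have h1 : ((μ Set.univ)⁻¹ • μ) Set.univ = 1 := measure_univ
  rwa [Measure.smul_apply, smul_eq_mul] at h1

lemma measure_univ_ne_zero (hP : IsPoissonSample μ P N Z) : μ Set.univ ≠ 0 := by
  intro h
  simpa [h] using hP.inv_measure_univ_mul

lemma measure_univ_ne_top (hP : IsPoissonSample μ P N Z) : μ Set.univ ≠ ⊤ := by
  intro h
  simpa [h] using hP.inv_measure_univ_mul

lemma isFiniteMeasure (hP : IsPoissonSample μ P N Z) : IsFiniteMeasure μ :=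
  ⟨hP.measure_univ_ne_top.lt_top⟩

/-- Campbell's formula for the Poisson point process `(Z i)_{i < N}` of intensity `μ`. -/
theorem lintegral_exp_sum_eq (hP : IsPoissonSample μ P N Z) {h : D → ℝ}
    (hh : Measurable h) (hint : Integrable (fun z ↦ Real.exp (h z)) μ) :
    ∫⁻ ω, ENNReal.ofReal (Real.exp (∑ i ∈ range (N ω), h (Z i ω))) ∂P =
      ENNReal.ofReal (Real.exp (∫ z, (Real.exp (h z) - 1) ∂μ)) := by
  have := hP.isFiniteMeasure
  set V := (μ Set.univ).toReal with hVdef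
  set J := ∫ z, Real.exp (h z) ∂μ
  have hV : 0 < V := ENNReal.toReal_pos hP.measure_univ_ne_zero hP.measure_univ_ne_top
  have hf : Measurable fun z ↦ ENNReal.ofReal (Real.exp (h z)) := by fun_prop
  have hmean : (μ Set.univ)⁻¹ * ∫⁻ z, ENNReal.ofReal (Real.exp (h z)) ∂μ =
      ENNReal.ofReal (J / V) := by
    rw [← ofReal_integral_eq_lintegral_ofReal hint (ae_of_all _ fun z ↦ (Real.exp_pos _).le),
      div_eq_inv_mul, ENNReal.ofReal_mul (by positivity), ENNReal.ofReal_inv_of_pos hV,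
      ENNReal.ofReal_toReal hP.measure_univ_ne_top]
  have hterm (n : ℕ) : P {ω | N ω = n} * (ENNReal.ofReal (J / V)) ^ n =
      ENNReal.ofReal (Real.exp (-V) * (J ^ n / n.factorial)) := by
    rw [hP.measure_count_eq, ← hVdef, ← ENNReal.ofReal_pow (by positivity),
      ← ENNReal.ofReal_mul (by positivity), div_pow]
    congr 1
    field_simp
  calc ∫⁻ ω, ENNReal.ofReal (Real.exp (∑ i ∈ range (N ω), h (Z i ω))) ∂P
      = ∫⁻ ω, ∏ i ∈ range (N ω), ENNReal.ofReal (Real.exp (h (Z i ω))) ∂P := by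
        simp_rw [Real.exp_sum, ENNReal.ofReal_prod_of_nonneg fun _ _ ↦ (Real.exp_pos _).le]
    _ = ∑' n, P {ω | N ω = n} * (ENNReal.ofReal (J / V)) ^ n := by
        rw [lintegral_comp_eq_tsum_of_indepFun (F := fun n (v : ℕ → D) ↦
            ∏ i ∈ range n, ENNReal.ofReal (Real.exp (h (v i))))
          hP.measurable_count (measurable_pi_lambda _ hP.measurable_sample)
          hP.indepFun_count_sample fun n ↦ by fun_prop]
        simp_rw [lintegral_prod_range_comp_eq_pow hP.measurable_sample hP.iIndepFun_sample
          hP.map_sample hf, lintegral_smul_measure, smul_eq_mul, hmean]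
        rfl
    _ = ENNReal.ofReal (Real.exp (-V) * Real.exp J) := by
        simp_rw [hterm]
        rw [← ENNReal.ofReal_tsum_of_nonneg (fun n ↦ by positivity)
          ((Real.summable_pow_div_factorial J).mul_left _), tsum_mul_left,
          Real.exp_eq_exp_ℝ, NormedSpace.exp_eq_tsum_div]
    _ = ENNReal.ofReal (Real.exp (∫ z, (Real.exp (h z) - 1) ∂μ)) := by
        rw [integral_sub hint (integrable_const 1), integral_const, smul_eq_mul, mul_one,
          ← Real.exp_add, measureReal_def, ← hVdef, neg_add_eq_sub]

section Bernstein

variable {g : D → ℝ} {b : ℝ}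

lemma lintegral_exp_mul_sum_sub_integral_le (hP : IsPoissonSample μ P N Z) (hg : Measurable g)
    (hgb : ∀ᵐ z ∂μ, |g z| ≤ b) {θ : ℝ} (hθ : 0 ≤ θ) (hθb : θ * b ≤ 1) :
    ∫⁻ ω, ENNReal.ofReal (Real.exp (θ * (∑ i ∈ range (N ω), g (Z i ω) - ∫ z, g z ∂μ))) ∂P ≤
      ENNReal.ofReal (Real.exp (θ ^ 2 * ∫ z, g z ^ 2 ∂μ)) := by
  have := hP.isFiniteMeasure
  have hθg : ∀ᵐ z ∂μ, |θ * g z| ≤ 1 := hgb.mono fun z hz ↦ by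
    rw [abs_mul, abs_of_nonneg hθ]
    exact (mul_le_mul_of_nonneg_left hz hθ).trans hθb
  have hθg_int : Integrable (fun z ↦ θ * g z) μ :=
    .of_bound (by fun_prop) 1 (by simpa only [Real.norm_eq_abs] using hθg)
  have hθg2_int : Integrable (fun z ↦ θ ^ 2 * g z ^ 2) μ :=
    .of_bound (by fun_prop) 1 <| hθg.mono fun z hz ↦ by
      rw [Real.norm_eq_abs, ← mul_pow, abs_pow]
      exact pow_le_one₀ (abs_nonneg _) hz
  have hexp_int : Integrable (fun z ↦ Real.exp (θ * g z)) μ :=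
    .of_bound (by fun_prop) (Real.exp 1) <| hθg.mono fun z hz ↦ by
      rw [Real.norm_eq_abs, Real.abs_exp]
      exact Real.exp_le_exp.2 ((le_abs_self _).trans hz)
  have hexp_sub_one_le : ∫ z, (Real.exp (θ * g z) - 1) ∂μ ≤
      θ * ∫ z, g z ∂μ + θ ^ 2 * ∫ z, g z ^ 2 ∂μ := by
    rw [← integral_const_mul, ← integral_const_mul, ← integral_add]
    · refine integral_mono_ae (hexp_int.sub (integrable_const 1)) ?_ (hθg.mono fun z hz ↦ ?_)
      · exact hθg_int.add hθg2_int
      · have := (abs_le.1 (Real.abs_exp_sub_one_sub_id_le hz)).2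
        rw [mul_pow] at this
        linarith
    · exact hθg_int
    · exact hθg2_int
  calc ∫⁻ ω, ENNReal.ofReal (Real.exp (θ * (∑ i ∈ range (N ω), g (Z i ω) - ∫ z, g z ∂μ))) ∂P
      = ENNReal.ofReal (Real.exp (-(θ * ∫ z, g z ∂μ))) *
          ∫⁻ ω, ENNReal.ofReal (Real.exp (∑ i ∈ range (N ω), θ * g (Z i ω))) ∂P := by
        rw [← lintegral_const_mul' _ _ ENNReal.ofReal_ne_top]
        congr 1 with ω
        rw [← ENNReal.ofReal_mul (Real.exp_pos _).le, ← Real.exp_add, ← mul_sum]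
        ring_nf
    _ = ENNReal.ofReal (Real.exp (-(θ * ∫ z, g z ∂μ) + ∫ z, (Real.exp (θ * g z) - 1) ∂μ)) := by
        rw [hP.lintegral_exp_sum_eq (by fun_prop) hexp_int, ← ENNReal.ofReal_mul (by positivity),
          Real.exp_add]
    _ ≤ ENNReal.ofReal (Real.exp (θ ^ 2 * ∫ z, g z ^ 2 ∂μ)) := by
        gcongr
        linarith

theorem measure_le_sum_sub_integral_le (hP : IsPoissonSample μ P N Z) (hg : Measurable g)
    (hgb : ∀ᵐ z ∂μ, |g z| ≤ b) {σ2 s : ℝ} (hgσ : ∫ z, g z ^ 2 ∂μ ≤ σ2) (hσ : 0 < σ2)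
    (hs : 0 ≤ s) (hsb : s * b ≤ 2 * σ2) :
    P {ω | s ≤ ∑ i ∈ range (N ω), g (Z i ω) - ∫ z, g z ∂μ} ≤
      ENNReal.ofReal (Real.exp (-(s ^ 2 / (4 * σ2)))) := by
  -- the minimiser of `θ ↦ θ ^ 2 * σ2 - θ * s`
  set θ := s / (2 * σ2)
  have hθ : 0 ≤ θ := by positivity
  have hθb : θ * b ≤ 1 := by
    rw [div_mul_eq_mul_div, div_le_one (by positivity)]
    exact hsb
  have hmeas : Measurable fun ω ↦
      ENNReal.ofReal (Real.exp (θ * (∑ i ∈ range (N ω), g (Z i ω) - ∫ z, g z ∂μ))) := by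
    have := hP.measurable_sum hg
    fun_prop
  calc P {ω | s ≤ ∑ i ∈ range (N ω), g (Z i ω) - ∫ z, g z ∂μ}
      ≤ P {ω | ENNReal.ofReal (Real.exp (θ * s)) ≤
          ENNReal.ofReal (Real.exp (θ * (∑ i ∈ range (N ω), g (Z i ω) - ∫ z, g z ∂μ)))} :=
        measure_mono fun ω hω ↦
          ENNReal.ofReal_le_ofReal (Real.exp_le_exp.2 (mul_le_mul_of_nonneg_left hω hθ))
    _ ≤ ENNReal.ofReal (Real.exp (θ ^ 2 * ∫ z, g z ^ 2 ∂μ)) /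
          ENNReal.ofReal (Real.exp (θ * s)) :=
        (meas_ge_le_lintegral_div hmeas.aemeasurable (by positivity) ENNReal.ofReal_ne_top).trans
          (ENNReal.div_le_div_right (hP.lintegral_exp_mul_sum_sub_integral_le hg hgb hθ hθb) _)
    _ ≤ ENNReal.ofReal (Real.exp (-(s ^ 2 / (4 * σ2)))) := by
        rw [← ENNReal.ofReal_div_of_pos (Real.exp_pos _), ← Real.exp_sub]
        gcongr
        calc θ ^ 2 * ∫ z, g z ^ 2 ∂μ - θ * s ≤ θ ^ 2 * σ2 - θ * s := by gcongr
          _ = -(s ^ 2 / (4 * σ2)) := by simp only [θ]; field_simp; ring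

theorem measure_le_abs_sum_sub_integral_le (hP : IsPoissonSample μ P N Z) (hg : Measurable g)
    (hgb : ∀ᵐ z ∂μ, |g z| ≤ b) {σ2 s : ℝ} (hgσ : ∫ z, g z ^ 2 ∂μ ≤ σ2) (hσ : 0 < σ2)
    (hs : 0 ≤ s) (hsb : s * b ≤ 2 * σ2) :
    P {ω | s ≤ |∑ i ∈ range (N ω), g (Z i ω) - ∫ z, g z ∂μ|} ≤
      ENNReal.ofReal (2 * Real.exp (-(s ^ 2 / (4 * σ2)))) := by
  have hneg := hP.measure_le_sum_sub_integral_le hg.neg (g := fun z ↦ -g z)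
    (by simpa only [abs_neg] using hgb) (by simpa only [neg_sq] using hgσ) hσ hs hsb
  simp only [sum_neg_distrib, integral_neg, sub_neg_eq_add, neg_add_eq_sub] at hneg
  calc P {ω | s ≤ |∑ i ∈ range (N ω), g (Z i ω) - ∫ z, g z ∂μ|}
      ≤ P ({ω | s ≤ ∑ i ∈ range (N ω), g (Z i ω) - ∫ z, g z ∂μ} ∪
          {ω | s ≤ ∫ z, g z ∂μ - ∑ i ∈ range (N ω), g (Z i ω)}) :=
        measure_mono fun ω (hω : s ≤ |_|) ↦ by
          rcases le_abs'.1 hω with h | h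
          · exact Or.inr (show s ≤ _ by linarith)
          · exact Or.inl h
    _ ≤ ENNReal.ofReal (Real.exp (-(s ^ 2 / (4 * σ2)))) +
          ENNReal.ofReal (Real.exp (-(s ^ 2 / (4 * σ2)))) :=
        (measure_union_le _ _).trans
          (add_le_add (hP.measure_le_sum_sub_integral_le hg hgb hgσ hσ hs hsb) hneg)
    _ = ENNReal.ofReal (2 * Real.exp (-(s ^ 2 / (4 * σ2)))) := by
        rw [two_mul, ENNReal.ofReal_add (by positivity) (by positivity)]

theorem measure_le_norm_sum_sub_integral_le {E : Type*} [NormedAddCommGroup E]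
    [InnerProductSpace ℝ E] [FiniteDimensional ℝ E] [MeasurableSpace E] [BorelSpace E]
    (hP : IsPoissonSample μ P N Z) {F : D → E} (hF : Measurable F)
    (hFb : ∀ᵐ z ∂μ, ‖F z‖ ≤ b) {σ2 t : ℝ} (hFσ : ∫ z, ‖F z‖ ^ 2 ∂μ ≤ σ2) (hσ : 0 < σ2)
    (ht : 0 < t) (htb : t * b ≤ 2 * √(Module.finrank ℝ E) * σ2) :
    P {ω | t ≤ ‖∑ i ∈ range (N ω), F (Z i ω) - ∫ z, F z ∂μ‖} ≤
      ENNReal.ofReal (2 * Module.finrank ℝ E *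
        Real.exp (-(t ^ 2 / (4 * Module.finrank ℝ E * σ2)))) := by
  have := hP.isFiniteMeasure
  set n := Module.finrank ℝ E
  set e := stdOrthonormalBasis ℝ E
  set s := t / √n
  have hFint : Integrable F μ := .of_bound hF.aestronglyMeasurable b hFb
  have hcoord (i) (z) : |inner ℝ (e i) (F z)| ≤ ‖F z‖ := by
    simpa only [e.orthonormal.1 i, one_mul] using abs_real_inner_le_norm (e i) (F z)
  have hcoord_le (i) : ∀ᵐ z ∂μ, |inner ℝ (e i) (F z)| ≤ b :=
    hFb.mono fun z ↦ (hcoord i z).trans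
  have hFsq_int : Integrable (fun z ↦ ‖F z‖ ^ 2) μ :=
    .of_bound (by fun_prop) (b ^ 2) <| hFb.mono fun z hz ↦ by
      rw [Real.norm_eq_abs, abs_pow, abs_norm]
      exact pow_le_pow_left₀ (norm_nonneg _) hz 2
  have hcoord_sq (i) : ∫ z, inner ℝ (e i) (F z) ^ 2 ∂μ ≤ σ2 := by
    refine le_trans (integral_mono ?_ hFsq_int fun z ↦ ?_) hFσ
    · refine .mono' hFsq_int (by fun_prop) (ae_of_all _ fun z ↦ ?_)
      rw [Real.norm_eq_abs, abs_pow]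
      exact pow_le_pow_left₀ (abs_nonneg _) (hcoord i z) 2
    · exact sq_le_sq.2 ((hcoord i z).trans (le_abs_self _))
  have hsb : s * b ≤ 2 * σ2 := by
    rw [div_mul_eq_mul_div]
    exact div_le_of_le_mul₀ (Real.sqrt_nonneg _) (by positivity) (by linarith)
  calc P {ω | t ≤ ‖∑ i ∈ range (N ω), F (Z i ω) - ∫ z, F z ∂μ‖}
      ≤ P (⋃ i, {ω | s ≤ |∑ k ∈ range (N ω), inner ℝ (e i) (F (Z k ω)) -
          ∫ z, inner ℝ (e i) (F z) ∂μ|}) := measure_mono fun ω (hω : t ≤ _) ↦ by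
        obtain ⟨i, hi⟩ := e.exists_div_sqrt_card_le_abs_inner ht hω
        rw [Fintype.card_fin, inner_sub_right, inner_sum, ← integral_inner hFint] at hi
        exact Set.mem_iUnion.2 ⟨i, hi⟩
    _ ≤ ∑ i, P {ω | s ≤ |∑ k ∈ range (N ω), inner ℝ (e i) (F (Z k ω)) -
          ∫ z, inner ℝ (e i) (F z) ∂μ|} := measure_iUnion_fintype_le _ _
    _ ≤ ∑ _i : Fin n, ENNReal.ofReal (2 * Real.exp (-(s ^ 2 / (4 * σ2)))) :=
        sum_le_sum fun i _ ↦ hP.measure_le_abs_sum_sub_integral_le (by fun_prop) (hcoord_le i)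
          (hcoord_sq i) hσ (by positivity) hsb
    _ = ENNReal.ofReal (2 * n * Real.exp (-(t ^ 2 / (4 * n * σ2)))) := by
        rw [sum_const, card_univ, Fintype.card_fin, nsmul_eq_mul, ← ENNReal.ofReal_natCast,
          ← ENNReal.ofReal_mul (by positivity), div_pow, Real.sq_sqrt (by positivity)]
        congr 1
        ring_nf

end Bernstein

end IsPoissonSample

lemma norm_inv_norm_pow_succ_smul_le {E : Type*} [NormedAddCommGroup E] [NormedSpace ℝ E]
    {q : ℝ} (hq : 0 < q) {z : E} (hz : q ≤ ‖z‖) (n : ℕ) :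
    ‖(‖z‖ ^ (n + 1))⁻¹ • z‖ ≤ (q ^ n)⁻¹ := by
  have hz0 : 0 < ‖z‖ := hq.trans_le hz
  rw [norm_smul, norm_inv, norm_pow, norm_norm, pow_succ, mul_inv, inv_mul_cancel_right₀ hz0.ne']
  exact inv_anti₀ (pow_pos hq n) (pow_le_pow_left₀ hq.le hz n)

lemma measureReal_le_of_subset_closedBall {E : Type*} [NormedAddCommGroup E] [NormedSpace ℝ E]
    [MeasurableSpace E] [BorelSpace E] [FiniteDimensional ℝ E] (μ : Measure E)
    [μ.IsAddHaarMeasure] {A : Set E} {r : ℝ} (hr : 0 ≤ r) (hA : A ⊆ Metric.closedBall 0 r) :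
    μ.real A ≤ r ^ Module.finrank ℝ E * μ.real (Metric.ball 0 1) :=
  (measureReal_mono hA measure_closedBall_lt_top.ne).trans_eq (μ.addHaar_real_closedBall 0 hr)

lemma setIntegral_norm_inv_norm_pow_succ_smul_sq_le {E : Type*} [NormedAddCommGroup E]
    [NormedSpace ℝ E] [MeasurableSpace E] [BorelSpace E] [FiniteDimensional ℝ E] (μ : Measure E)
    [μ.IsAddHaarMeasure] {q R : ℝ} (hq : 0 < q) (hR : 0 ≤ R) {A : Set E} (hA : MeasurableSet A)
    (hAq : A ⊆ {z | q ≤ ‖z‖ ∧ ‖z‖ ≤ R * q}) (n : ℕ) :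
    ∫ z in A, ‖(‖z‖ ^ (n + 1))⁻¹ • z‖ ^ 2 ∂μ ≤
      (R * q) ^ Module.finrank ℝ E * μ.real (Metric.ball 0 1) * ((q ^ n)⁻¹) ^ 2 := by
  have hball : A ⊆ Metric.closedBall 0 (R * q) := fun z hz ↦ by simpa using (hAq hz).2
  have hvol := measureReal_le_of_subset_closedBall μ (by positivity) hball
  have : IsFiniteMeasure (μ.restrict A) :=
    isFiniteMeasure_restrict.2 ((measure_mono hball).trans_lt measure_closedBall_lt_top).ne
  calc ∫ z in A, ‖(‖z‖ ^ (n + 1))⁻¹ • z‖ ^ 2 ∂μ ≤ ∫ _ in A, ((q ^ n)⁻¹) ^ 2 ∂μ :=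
        integral_mono_of_nonneg (ae_of_all _ fun _ ↦ by positivity) (integrable_const _)
          (ae_restrict_of_forall_mem hA fun z hz ↦
            pow_le_pow_left₀ (norm_nonneg _) (norm_inv_norm_pow_succ_smul_le hq (hAq hz).1 n) 2)
    _ = μ.real A * ((q ^ n)⁻¹) ^ 2 := by rw [setIntegral_const, smul_eq_mul]
    _ ≤ _ := by gcongr

/-- Single-annulus moderate deviation estimate. Let `d ≥ 3`, `q > 0`, and
`A ⊆ {q ≤ |z| ≤ 8q}` with `Vol(A) > 0`. Let `N` be Poisson with mean `Vol(A)` and `(Z_i)`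
i.i.d. uniform on `A`, independent of `N`. Then there are `C, c, c' > 0` depending only on
`d` such that for `0 < t ≤ c'·q`,
`P(|Σ_{i=1}^N Z_i/|Z_i|^d - ∫_A z/|z|^d dz| ≥ t) ≤ C·exp(-c·q^{d-2}·t²)`. -/
theorem annulus_force_moderate_deviation (d : ℕ) (hd : 3 ≤ d) :
    ∃ C : ℝ, 0 < C ∧ ∃ c : ℝ, 0 < c ∧ ∃ c' : ℝ, 0 < c' ∧
      ∀ (q : ℝ), 0 < q →
      ∀ (A : Set (EuclideanSpace ℝ (Fin d))), MeasurableSet A →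
        A ⊆ {z | q ≤ ‖z‖ ∧ ‖z‖ ≤ 8 * q} → 0 < volume A →
      ∀ (Ω : Type) (_ : MeasureSpace Ω), IsProbabilityMeasure (ℙ : Measure Ω) →
      ∀ (N : Ω → ℕ), Measurable N →
        -- `N` is Poisson with mean `Vol(A)`
        (∀ n : ℕ, ℙ {ω | N ω = n} =
          ENNReal.ofReal (Real.exp (-(volume A).toReal) * (volume A).toReal ^ n /
            (Nat.factorial n))) →
      ∀ (Z : ℕ → Ω → EuclideanSpace ℝ (Fin d)), (∀ i, Measurable (Z i)) →
        -- the `Z_i` are uniformly distributed on `A` ...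
        (∀ i, Measure.map (Z i) ℙ = (volume A)⁻¹ • volume.restrict A) →
        -- ... mutually independent ...
        iIndepFun Z ℙ →
        -- ... and the whole family `(Z_i)` is independent of `N`
        IndepFun N (fun ω i => Z i ω) ℙ →
      ∀ t : ℝ, 0 < t → t ≤ c' * q →
        ℙ {ω | t ≤ ‖(∑ i ∈ Finset.range (N ω), (‖Z i ω‖ ^ d)⁻¹ • Z i ω) -
              ∫ z in A, (‖z‖ ^ d)⁻¹ • z‖} ≤
          ENNReal.ofReal (C * Real.exp (-c * q ^ (d - 2) * t ^ 2)) := by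
  obtain ⟨m, rfl⟩ : ∃ m, d = m + 2 := ⟨d - 2, by omega⟩
  set K : ℝ := 8 ^ (m + 2) * volume.real (Metric.ball (0 : EuclideanSpace ℝ (Fin (m + 2))) 1)
  have hK : 0 < K := mul_pos (by positivity) <|
    ENNReal.toReal_pos (Metric.measure_ball_pos _ _ one_pos).ne' measure_ball_lt_top.ne
  -- each coordinate of the force is bounded by `b = q^-(m+1)` and has variance at most
  -- `σ² = K / q^m`; the Chernoff parameter is admissible while `t b ≤ 2 σ²`, i.e. `t ≤ 2 K q`
  refine ⟨2 * (m + 2), by positivity, (4 * (m + 2) * K)⁻¹, by positivity, 2 * K, by positivity, ?_⟩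
  intro q hq A hA hAq _ Ω _ _ N hN hNpois Z hZ hZlaw hZind hNZ t ht htq
  have hP : IsPoissonSample (volume.restrict A) ℙ N Z :=
    ⟨hN, hZ, by simpa only [Measure.restrict_apply_univ] using hNpois,
      by simpa only [Measure.restrict_apply_univ] using hZlaw, hZind, hNZ⟩
  have hforce : ∀ᵐ z ∂volume.restrict A, ‖(‖z‖ ^ (m + 2))⁻¹ • z‖ ≤ (q ^ (m + 1))⁻¹ :=
    ae_restrict_of_forall_mem hA fun z hz ↦ norm_inv_norm_pow_succ_smul_le hq (hAq hz).1 _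
  have hσ : ∫ z in A, ‖(‖z‖ ^ (m + 2))⁻¹ • z‖ ^ 2 ≤ K / q ^ m := by
    refine (setIntegral_norm_inv_norm_pow_succ_smul_sq_le volume hq (by norm_num) hA hAq
      (m + 1)).trans_eq ?_
    rw [finrank_euclideanSpace_fin]
    field_simp
    ring
  have htb : t * (q ^ (m + 1))⁻¹ ≤
      2 * √(Module.finrank ℝ (EuclideanSpace ℝ (Fin (m + 2)))) * (K / q ^ m) :=
    calc t * (q ^ (m + 1))⁻¹ ≤ 2 * K * q * (q ^ (m + 1))⁻¹ := by gcongr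
      _ = 2 * 1 * (K / q ^ m) := by field_simp; ring
      _ ≤ 2 * √(Module.finrank ℝ (EuclideanSpace ℝ (Fin (m + 2)))) * (K / q ^ m) := by
        gcongr
        rw [finrank_euclideanSpace_fin, Real.one_le_sqrt]
        norm_cast
        omega
  refine (hP.measure_le_norm_sum_sub_integral_le (by fun_prop) hforce hσ (by positivity) ht
    htb).trans_eq ?_
  rw [finrank_euclideanSpace_fin, Nat.add_sub_cancel]
  push_cast
  congr 3
  field_simp
end
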